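/- arXiv:2604.17563 — 3 statements merged into one kernel-verified Lean document; each statement's English description precedes it below -/
import Mathlib

section
/- Let G_r be the graph with vertex set {x_1,...,x_n} ∪ {s_{i,l} : 1 ≤ i ≤ n, 1 ≤ l ≤ r_i}, and edges making each set I_i = {x_i} ∪ {s_{i-1,l}}_l ∪ {s_{i,l}}_l a clique (for i = 1,...,n, with the convention that the s_0 block is empty). Then the elimination ordering s_{n,1}, x_n, s_{n-1,1},...,s_{n-1,r_{n-1}}, x_{n-1}, ..., s_{1,1},...,s_{1,r_1}, x_1 is a perfect elimination ordering, so G_r is chordal. -/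
/-- Vertices of the lifted correlative sparsity graph: `Sum.inl i` is the original
variable xᵢ, `Sum.inr (i, l)` is the lifting variable s_{i,l}. -/
abbrev LVert : Type := ℕ ⊕ ℕ × ℕ

/-- The clique Iᵢ = {xᵢ} ∪ {s_{i-1,l}}ₗ ∪ {s_{i,l}}ₗ (the s₀ block is empty). -/
def Ibag (r : ℕ → ℕ) (i : ℕ) : Set LVert :=
  {v | match v with
    | Sum.inl j => j = i
    | Sum.inr (j, l) => 1 ≤ l ∧ l ≤ r j ∧ 1 ≤ j ∧ (j = i ∨ j + 1 = i)}

/-- The correlative sparsity graph G_r: the union of the cliques I₁,…,Iₙ. -/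
def Gr (n : ℕ) (r : ℕ → ℕ) : SimpleGraph LVert where
  Adj u v := u ≠ v ∧ ∃ i, 1 ≤ i ∧ i ≤ n ∧ u ∈ Ibag r i ∧ v ∈ Ibag r i
  symm := ⟨by
    rintro u v ⟨hne, i, h1, h2, hu, hv⟩
    exact ⟨hne.symm, i, h1, h2, hv, hu⟩⟩
  loopless := ⟨fun v h => h.1 rfl⟩

/-- ρ is a perfect elimination ordering for G: for each vertex, its neighbors
that come later in the ordering form a clique. -/
def IsPEO {V : Type*} (G : SimpleGraph V) (ρ : V → ℕ) : Prop :=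
  ∀ u v w, G.Adj u v → G.Adj u w → ρ u < ρ v → ρ u < ρ w → v ≠ w → G.Adj v w

/-- A graph is chordal: every cycle of length at least 4 has a chord, i.e. two
vertices of the cycle adjacent in the graph but not consecutive on the cycle. -/
def Chordal {V : Type*} (G : SimpleGraph V) : Prop :=
  ∀ (v : V) (c : G.Walk v v), c.IsCycle → 4 ≤ c.length →
    ∃ a b, a ∈ c.support ∧ b ∈ c.support ∧ G.Adj a b ∧ s(a, b) ∉ c.edges

/-- The elimination ordering s_{n,1}, xₙ, s_{n-1,1},…,s_{n-1,r_{n-1}}, x_{n-1}, …,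
s_{1,1},…,s_{1,r₁}, x₁: vertices of column i are eliminated after all columns
j > i, states first, then xᵢ. -/
def elimRank (n : ℕ) (r : ℕ → ℕ) : LVert → ℕ
  | Sum.inl i => (∑ j ∈ Finset.Ioc i n, (r j + 1)) + r i
  | Sum.inr (i, l) => (∑ j ∈ Finset.Ioc i n, (r j + 1)) + (l - 1)

/-!
A vertex `x_i` or `s_{i,l}` lies in column `i`, and the ordering eliminates the columns from `n`
down to `1`. The only cliques containing a vertex `u` of column `i` are `I_i` and, if
`u = s_{i,l}`, `I_{i+1}`; apart from the `s_{i,l}`, which also lie in `I_i`, the clique `I_{i+1}`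
consists of column `i + 1`, eliminated before `u`. So the later neighbours of `u` all lie in
`I_i` and form a clique. A perfect elimination ordering that separates adjacent vertices gives
chordality: on a cycle of length at least `4`, the two cycle-neighbours of its earliest vertex
are adjacent, and that edge is a chord.
-/

namespace SimpleGraph.Walk

variable {V : Type*} {G : SimpleGraph V} {u : V}

theorem IsCycle.snd_penultimate_notMem_edges {c : G.Walk u u} (hc : c.IsCycle)
    (hlen : 4 ≤ c.length) : s(c.snd, c.penultimate) ∉ c.edges := by
  have hedges : c.edges = s(u, c.snd) :: c.tail.edges := by
    rw [← edges_cons (c.adj_snd hc.not_nil), c.cons_tail_eq hc.not_nil]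
  rw [hedges, List.mem_cons, Sym2.eq_iff]
  rintro ((⟨hsnd, -⟩ | ⟨-, hpen⟩) | he)
  · exact (c.adj_snd hc.not_nil).ne hsnd.symm
  · exact (c.adj_penultimate hc.not_nil).ne hpen
  · have hpen : c.penultimate = c.getVert 2 := by
      simpa using hc.isPath_tail.eq_snd_of_mem_edges he
    have := hc.getVert_injOn (by simp; omega) (by simp; omega) hpen
    omega

end SimpleGraph.Walk

open SimpleGraph.Walk in
theorem IsPEO.chordal {V : Type*} {G : SimpleGraph V} {ρ : V → ℕ} (hpeo : IsPEO G ρ)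
    (hρ : ∀ ⦃u v⦄, G.Adj u v → ρ u ≠ ρ v) : Chordal G := by
  classical
  intro v c hc hlen
  obtain ⟨u, hu, hmin⟩ :=
    c.support.toFinset.exists_min_image ρ ⟨v, List.mem_toFinset.2 c.start_mem_support⟩
  rw [List.mem_toFinset] at hu
  have hlater : ∀ w ∈ c.support, G.Adj u w → ρ u < ρ w := fun w hw huw =>
    (hmin w (List.mem_toFinset.2 hw)).lt_of_ne (hρ huw)
  set c' := c.rotate u hu
  have hc' : c'.IsCycle := hc.rotate hu
  have hedges : ∀ {e}, e ∈ c'.edges ↔ e ∈ c.edges := (c.rotate_edges u hu).perm.mem_iff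
  have hlen' : 4 ≤ c'.length := by
    rwa [← length_edges, (c.rotate_edges u hu).perm.length_eq, length_edges]
  have hb : c'.snd ∈ c.support :=
    c.snd_mem_support_of_mem_edges (hedges.1 (c'.mk_start_snd_mem_edges hc'.not_nil))
  have hd : c'.penultimate ∈ c.support :=
    c.fst_mem_support_of_mem_edges (hedges.1 (c'.mk_penultimate_end_mem_edges hc'.not_nil))
  have hub := c'.adj_snd hc'.not_nil
  have hud := (c'.adj_penultimate hc'.not_nil).symm
  refine ⟨c'.snd, c'.penultimate, hb, hd, ?_, fun h =>
    hc'.snd_penultimate_notMem_edges hlen' (hedges.2 h)⟩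
  exact hpeo u _ _ hub hud (hlater _ hb hub) (hlater _ hd hud) hc'.snd_ne_penultimate

def colIdx : LVert → ℕ
  | Sum.inl i => i
  | Sum.inr (i, _) => i

def posInCol (r : ℕ → ℕ) : LVert → ℕ
  | Sum.inl i => r i
  | Sum.inr (_, l) => l - 1

def colOffset (n : ℕ) (r : ℕ → ℕ) (i : ℕ) : ℕ := ∑ j ∈ Finset.Ioc i n, (r j + 1)

theorem elimRank_eq (n : ℕ) (r : ℕ → ℕ) (v : LVert) :
    elimRank n r v = colOffset n r (colIdx v) + posInCol r v := by
  rcases v with i | ⟨i, l⟩ <;> rfl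

theorem colOffset_add_lt_colOffset (n : ℕ) (r : ℕ → ℕ) {i j p : ℕ} (hij : i < j) (hjn : j ≤ n)
    (hp : p ≤ r j) : colOffset n r j + p < colOffset n r i := by
  have hsplit : ∑ k ∈ Finset.Ioc i j, (r k + 1) + colOffset n r j = colOffset n r i :=
    Finset.sum_Ioc_consecutive _ hij.le hjn
  have hle : r j + 1 ≤ ∑ k ∈ Finset.Ioc i j, (r k + 1) :=
    Finset.single_le_sum (f := fun k => r k + 1) (fun _ _ => Nat.zero_le _)
      (Finset.right_mem_Ioc.2 hij)
  omega

theorem eq_of_colOffset_add_eq (n : ℕ) (r : ℕ → ℕ) {i j p q : ℕ} (hin : i ≤ n) (hjn : j ≤ n)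
    (hp : p ≤ r i) (hq : q ≤ r j) (h : colOffset n r i + p = colOffset n r j + q) :
    i = j ∧ p = q := by
  rcases lt_trichotomy i j with hij | rfl | hji
  · have := colOffset_add_lt_colOffset n r hij hjn hq
    omega
  · omega
  · have := colOffset_add_lt_colOffset n r hji hin hp
    omega

section Columns

variable {n : ℕ} {r : ℕ → ℕ} {j : ℕ} {u v : LVert}

theorem colIdx_le_of_mem_Ibag (hv : v ∈ Ibag r j) : colIdx v ≤ j := by
  rcases v with i | ⟨i, l⟩
  · exact (show i = j from hv).le
  · obtain ⟨-, -, -, hij⟩ := hv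
    simp only [colIdx]
    omega

theorem one_le_colIdx_of_mem_Ibag (hj : 1 ≤ j) (hv : v ∈ Ibag r j) : 1 ≤ colIdx v := by
  rcases v with i | ⟨i, l⟩
  · exact (show i = j from hv) ▸ hj
  · exact hv.2.2.1

theorem posInCol_le (hv : v ∈ Ibag r j) : posInCol r v ≤ r (colIdx v) := by
  rcases v with i | ⟨i, l⟩
  · exact le_rfl
  · obtain ⟨-, hlr, -⟩ := hv
    exact (Nat.sub_le l 1).trans hlr

theorem elimRank_lt_of_colIdx_lt (hjn : j ≤ n) (hv : v ∈ Ibag r j) (h : colIdx u < colIdx v) :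
    elimRank n r v < elimRank n r u := by
  rw [elimRank_eq, elimRank_eq]
  have := colOffset_add_lt_colOffset n r h ((colIdx_le_of_mem_Ibag hv).trans hjn)
    (posInCol_le hv)
  omega

theorem mem_Ibag_colIdx_of_elimRank_lt (hjn : j ≤ n) (hu : u ∈ Ibag r j) (hv : v ∈ Ibag r j)
    (hlt : elimRank n r u < elimRank n r v) :
    v ∈ Ibag r (colIdx u) := by
  by_cases hu_col : colIdx u = j
  · exact hu_col ▸ hv
  have hv_col : colIdx v ≤ colIdx u :=
    not_lt.1 fun h => lt_asymm hlt (elimRank_lt_of_colIdx_lt hjn hv h)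
  rcases u with i | ⟨i, l⟩
  · exact absurd hu hu_col
  -- `u = s_{j-1,l}`, and `v` cannot lie in the earlier column `j`
  have hij : i + 1 = j := hu.2.2.2.resolve_left hu_col
  rcases v with k | ⟨k, m⟩
  · have hk : k = j := hv
    simp only [colIdx] at hv_col
    omega
  · obtain ⟨hm, hmr, hk, hkj⟩ := hv
    simp only [colIdx] at hv_col ⊢
    exact ⟨hm, hmr, hk, by omega⟩

end Columns

theorem isPEO_Gr (n : ℕ) (r : ℕ → ℕ) : IsPEO (Gr n r) (elimRank n r) := by
  rintro u v w ⟨-, j, hj1, hjn, huj, hvj⟩ ⟨-, k, -, hkn, huk, hwk⟩ hv hw hvw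
  exact ⟨hvw, colIdx u, one_le_colIdx_of_mem_Ibag hj1 huj, (colIdx_le_of_mem_Ibag huj).trans hjn,
    mem_Ibag_colIdx_of_elimRank_lt hjn huj hvj hv, mem_Ibag_colIdx_of_elimRank_lt hkn huk hwk hw⟩

theorem injOn_elimRank (n : ℕ) (r : ℕ → ℕ) :
    Set.InjOn (elimRank n r) {v | ∃ i, 1 ≤ i ∧ i ≤ n ∧ v ∈ Ibag r i} := by
  rintro u ⟨i, -, hin, hu⟩ v ⟨k, -, hkn, hv⟩ h
  rw [elimRank_eq, elimRank_eq] at h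
  obtain ⟨hcol, hpos⟩ := eq_of_colOffset_add_eq n r ((colIdx_le_of_mem_Ibag hu).trans hin)
    ((colIdx_le_of_mem_Ibag hv).trans hkn) (posInCol_le hu) (posInCol_le hv) h
  rcases u with a | ⟨a, l⟩ <;> rcases v with b | ⟨b, m⟩ <;>
    simp only [colIdx, posInCol] at hcol hpos <;> subst hcol
  · rfl
  · obtain ⟨hm, hmr : m ≤ r a, -⟩ := hv
    omega
  · obtain ⟨hl, hlr : l ≤ r a, -⟩ := hu
    omega
  · obtain ⟨hl, -⟩ := hu
    obtain ⟨hm, -⟩ := hv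
    obtain rfl : l = m := by omega
    rfl

theorem stmt_12_general (n : ℕ) (r : ℕ → ℕ) :
    IsPEO (Gr n r) (elimRank n r) ∧
    Set.InjOn (elimRank n r) {v | ∃ i, 1 ≤ i ∧ i ≤ n ∧ v ∈ Ibag r i} ∧
    Chordal (Gr n r) := by
  refine ⟨isPEO_Gr n r, injOn_elimRank n r, (isPEO_Gr n r).chordal ?_⟩
  rintro u v ⟨huv, i, hi1, hin, hu, hv⟩ h
  exact huv (injOn_elimRank n r ⟨i, hi1, hin, hu⟩ ⟨i, hi1, hin, hv⟩ h)

/-- the given elimination ordering is a perfect elimination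
ordering of G_r (and is injective on its vertices), hence G_r is chordal. -/
theorem stmt_12 (n : ℕ) (r : ℕ → ℕ) (hrn : r n = 1)
    (hr : ∀ i, 1 ≤ i → i ≤ n → 1 ≤ r i) :
    IsPEO (Gr n r) (elimRank n r) ∧
    Set.InjOn (elimRank n r) {v | ∃ i, 1 ≤ i ∧ i ≤ n ∧ v ∈ Ibag r i} ∧
    Chordal (Gr n r) :=
  stmt_12_general n r
end

section
/- If (μ_i)_{i=1}^n are probability measures with μ_1 on ℝ (supported in K_1) and μ_i on ℝ^{r_{i-1}} × ℝ (supported in K_i), satisfying (π_{s_{i-1}})_# μ_i = (F_{i-1})_# μ_{i-1} for i = 2,...,n, then ∫ F_n dμ_n ≥ inf over feasible x of p(x), where p(x) = s_n for the chain s_1 = F_1(x_1), s_i = F_i(s_{i-1}, x_i) and x feasible means x_1 ∈ K_1 and (s_{i-1}, x_i) ∈ K_i for all i. In particular the infimum of the measure problem equals the infimum of the original compositional problem when combined with the Dirac construction. -/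
/-!
Push the support constraints forward along the chain: by induction on `i`, the marginal
consistency conditions force `μ i` to be concentrated on the compact set of pairs
`(sᵢ, xᵢ₊₁) ∈ Kᵢ` whose state `sᵢ` is reachable by a feasible `x`. On this compact set the
continuous objective attains its minimum at some point, which is the value of a feasible `x`,
and a probability measure concentrated there integrates the objective to at least that minimum.
-/

open MeasureTheory

/-- The state chain s₁ = F₁(x₁), sᵢ₊₁ = Fᵢ₊₁(sᵢ, xᵢ₊₁) (junk value at index 0). -/
def states (r : ℕ → ℕ) (F1 : ℝ → (Fin (r 1) → ℝ))
    (F : (i : ℕ) → (Fin (r i) → ℝ) → ℝ → (Fin (r (i + 1)) → ℝ))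
    (x : ℕ → ℝ) : (i : ℕ) → Fin (r i) → ℝ
  | 0 => fun _ => 0
  | 1 => F1 (x 1)
  | (i + 2) => F (i + 1) (states r F1 F x (i + 1)) (x (i + 2))

theorem IsCompact.exists_le_integral_of_ae_mem {X : Type*} [TopologicalSpace X]
    [MeasurableSpace X] [OpensMeasurableSpace X] {ν : Measure X} [IsProbabilityMeasure ν]
    {A : Set X} {f : X → ℝ} (hA : IsCompact A) (hf : Continuous f) (hν : ∀ᵐ p ∂ν, p ∈ A) :
    ∃ p ∈ A, f p ≤ ∫ q, f q ∂ν := by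
  obtain ⟨p, hpA, hmin⟩ := hA.exists_isMinOn hν.exists hf.continuousOn
  obtain ⟨C, hC⟩ := hA.exists_bound_of_continuousOn hf.continuousOn
  have hint : Integrable f ν :=
    (integrable_const C).mono' hf.aestronglyMeasurable (hν.mono hC)
  refine ⟨p, hpA, ?_⟩
  calc f p = ∫ _, f p ∂ν := by simp
    _ ≤ ∫ q, f q ∂ν := integral_mono_ae (integrable_const _) hint (hν.mono fun _ hq => hmin hq)

theorem ae_mem_of_map_eq_map {α β γ : Type*} [MeasurableSpace α] [MeasurableSpace β]
    [MeasurableSpace γ] {ν : Measure α} {ρ : Measure β} {φ : α → γ} {g : β → γ}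
    (hφ : Measurable φ) (hg : Measurable g) (h : ν.map φ = ρ.map g) {T : Set γ}
    (hT : MeasurableSet T) (hρ : ∀ᵐ q ∂ρ, g q ∈ T) : ∀ᵐ p ∂ν, φ p ∈ T := by
  rwa [← ae_map_iff (p := (· ∈ T)) hφ.aemeasurable hT, h,
    ae_map_iff (p := (· ∈ T)) hg.aemeasurable hT]

section Chain

variable {r : ℕ → ℕ} {F1 : ℝ → (Fin (r 1) → ℝ)}
  {F : (i : ℕ) → (Fin (r i) → ℝ) → ℝ → (Fin (r (i + 1)) → ℝ)}
  {K1 : Set ℝ} {K : (i : ℕ) → Set ((Fin (r i) → ℝ) × ℝ)}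

theorem states_congr {x y : ℕ → ℝ} :
    ∀ i, (∀ j, 1 ≤ j → j ≤ i → x j = y j) → states r F1 F x i = states r F1 F y i
  | 0, _ => rfl
  | 1, h => by rw [states, states, h 1 le_rfl le_rfl]
  | (i + 2), h => by
      rw [states, states, states_congr (i + 1) fun j hj _ => h j hj (by omega),
        h (i + 2) (by omega) le_rfl]

theorem states_update_of_lt {x : ℕ → ℝ} {i k : ℕ} (t : ℝ) (hik : i < k) :
    states r F1 F (Function.update x k t) i = states r F1 F x i :=
  states_congr i fun _ _ hj => Function.update_of_ne (by omega) _ _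

variable (r F1 F K1 K)

def IsFeasibleUpTo (i : ℕ) (x : ℕ → ℝ) : Prop :=
  x 1 ∈ K1 ∧ ∀ j, 1 ≤ j → j + 1 ≤ i →
    ((states r F1 F x j, x (j + 1)) : (Fin (r j) → ℝ) × ℝ) ∈ K j

/-- The set of states `sᵢ` attained by points feasible up to `i`. -/
def reach : (i : ℕ) → Set (Fin (r i) → ℝ)
  | 0 => ∅
  | 1 => F1 '' K1
  | (i + 2) => (fun p : (Fin (r (i + 1)) → ℝ) × ℝ => F (i + 1) p.1 p.2) ''
      (K (i + 1) ∩ Prod.fst ⁻¹' reach (i + 1))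

variable {r F1 F K1 K}

theorem isCompact_reach (hF1 : Continuous F1)
    (hF : ∀ i, Continuous fun p : (Fin (r i) → ℝ) × ℝ => F i p.1 p.2)
    (hK1 : IsCompact K1) (hK : ∀ i, IsCompact (K i)) :
    ∀ i, IsCompact (reach r F1 F K1 K i)
  | 0 => isCompact_empty
  | 1 => hK1.image hF1
  | (i + 2) => ((hK (i + 1)).inter_right ((isCompact_reach hF1 hF hK1 hK (i + 1)).isClosed.preimage
      continuous_fst)).image (hF (i + 1))

theorem mem_reach_succ {i : ℕ} (hi : 1 ≤ i) {p : (Fin (r i) → ℝ) × ℝ} (hpK : p ∈ K i)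
    (hp : p.1 ∈ reach r F1 F K1 K i) : F i p.1 p.2 ∈ reach r F1 F K1 K (i + 1) := by
  obtain ⟨j, rfl⟩ : ∃ j, i = j + 1 := ⟨i - 1, by omega⟩
  exact ⟨p, ⟨hpK, hp⟩, rfl⟩

theorem IsFeasibleUpTo.update {i : ℕ} {x : ℕ → ℝ} (hx : IsFeasibleUpTo r F1 F K1 K i x)
    (hi : 1 ≤ i) {t : ℝ} (ht : (states r F1 F x i, t) ∈ K i) :
    IsFeasibleUpTo r F1 F K1 K (i + 1) (Function.update x (i + 1) t) := by
  refine ⟨by rw [Function.update_of_ne (by omega)]; exact hx.1, fun j hj hji => ?_⟩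
  rw [states_update_of_lt t (by omega : j < i + 1)]
  rcases Nat.lt_or_ge j i with hlt | hge
  · rw [Function.update_of_ne (by omega)]
    exact hx.2 j hj (by omega)
  · obtain rfl : j = i := by omega
    rwa [Function.update_self]

theorem exists_isFeasibleUpTo_of_mem_reach :
    ∀ i, ∀ s ∈ reach r F1 F K1 K i, ∃ x, IsFeasibleUpTo r F1 F K1 K i x ∧ states r F1 F x i = s
  | 0, _, hs => absurd hs (Set.notMem_empty _)
  | 1, _, ⟨x1, hx1, hs⟩ => ⟨fun _ => x1, ⟨hx1, fun _ _ _ => by omega⟩, hs⟩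
  | (i + 2), _, ⟨p, ⟨hpK, hp⟩, hs⟩ => by
      obtain ⟨x, hx, hxs⟩ := exists_isFeasibleUpTo_of_mem_reach (i + 1) p.1 hp
      refine ⟨Function.update x (i + 2) p.2, hx.update (by omega) (by rwa [hxs]), ?_⟩
      rw [states, states_update_of_lt _ (by omega), Function.update_self, hxs, ← hs]

theorem ae_mem_reach {n : ℕ} {μ1 : Measure ℝ} {μ : (i : ℕ) → Measure ((Fin (r i) → ℝ) × ℝ)}
    (hF1 : Continuous F1) (hF : ∀ i, Continuous fun p : (Fin (r i) → ℝ) × ℝ => F i p.1 p.2)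
    (hK1 : IsCompact K1) (hK : ∀ i, IsCompact (K i))
    (hsupp1 : μ1 K1ᶜ = 0) (hsupp : ∀ i, 1 ≤ i → i + 1 ≤ n → μ i (K i)ᶜ = 0)
    (hcons1 : (μ 1).map Prod.fst = μ1.map F1)
    (hcons : ∀ i, 1 ≤ i → i + 2 ≤ n →
      (μ (i + 1)).map Prod.fst = (μ i).map fun p => F i p.1 p.2) :
    ∀ i, 1 ≤ i → i + 1 ≤ n → ∀ᵐ p ∂μ i, p ∈ K i ∧ p.1 ∈ reach r F1 F K1 K i := by
  have hmeas i : MeasurableSet (reach r F1 F K1 K i) :=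
    (isCompact_reach hF1 hF hK1 hK i).isClosed.measurableSet
  intro i hi
  induction i, hi using Nat.le_induction with
  | base =>
    intro hn
    have hK1ae : ∀ᵐ x ∂μ1, x ∈ K1 := mem_ae_iff.2 hsupp1
    have hKae : ∀ᵐ p ∂μ 1, p ∈ K 1 := mem_ae_iff.2 (hsupp 1 le_rfl hn)
    have hreach : ∀ᵐ x ∂μ1, F1 x ∈ reach r F1 F K1 K 1 :=
      hK1ae.mono fun x hx => Set.mem_image_of_mem F1 hx
    exact hKae.and
      (ae_mem_of_map_eq_map measurable_fst hF1.measurable hcons1 (hmeas 1) hreach)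
  | succ i hi ih =>
    intro hn
    have hreach : ∀ᵐ p ∂μ i, F i p.1 p.2 ∈ reach r F1 F K1 K (i + 1) :=
      (ih (by omega)).mono fun p hp => mem_reach_succ hi hp.1 hp.2
    have hKae : ∀ᵐ p ∂μ (i + 1), p ∈ K (i + 1) := mem_ae_iff.2 (hsupp (i + 1) (by omega) hn)
    exact hKae.and
      (ae_mem_of_map_eq_map measurable_fst (hF i).measurable (hcons i hi hn) (hmeas _) hreach)

end Chain

/-- any feasible family of measures for the push-forward
(measure-propagation) formulation has objective value ∫ Fₙ dμₙ at least the
infimum of the original compositional problem over feasible x (computed in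
EReal). Here μ i, for 1 ≤ i ≤ n−1, is the transition measure on (sᵢ, xᵢ₊₁). -/
theorem stmt_17 (n : ℕ) (hn : 2 ≤ n) (r : ℕ → ℕ) (hrn : r n = 1)
    (F1 : ℝ → (Fin (r 1) → ℝ)) (hF1 : Continuous F1)
    (F : (i : ℕ) → (Fin (r i) → ℝ) → ℝ → (Fin (r (i + 1)) → ℝ))
    (hF : ∀ i, Continuous fun p : (Fin (r i) → ℝ) × ℝ => F i p.1 p.2)
    (K1 : Set ℝ) (hK1 : IsCompact K1)
    (K : (i : ℕ) → Set ((Fin (r i) → ℝ) × ℝ)) (hK : ∀ i, IsCompact (K i))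
    (μ1 : Measure ℝ)
    (μ : (i : ℕ) → Measure ((Fin (r i) → ℝ) × ℝ))
    (hprob : ∀ i, 1 ≤ i → i + 1 ≤ n → IsProbabilityMeasure (μ i))
    (hsupp1 : μ1 K1ᶜ = 0)
    (hsupp : ∀ i, 1 ≤ i → i + 1 ≤ n → μ i (K i)ᶜ = 0)
    (hcons1 : (μ 1).map Prod.fst = μ1.map F1)
    (hcons : ∀ i, 1 ≤ i → i + 2 ≤ n →
      (μ (i + 1)).map Prod.fst = (μ i).map fun p => F i p.1 p.2) :
    sInf {v : EReal | ∃ x : ℕ → ℝ, x 1 ∈ K1 ∧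
        (∀ i, 1 ≤ i → i + 1 ≤ n →
          ((states r F1 F x i, x (i + 1)) : (Fin (r i) → ℝ) × ℝ) ∈ K i) ∧
        v = ((states r F1 F x n ⟨0, by omega⟩ : ℝ) : EReal)}
      ≤ ((∫ p, F (n - 1) p.1 p.2
            ⟨0, by rw [Nat.sub_add_cancel (by omega : 1 ≤ n), hrn]; omega⟩
            ∂(μ (n - 1)) : ℝ) : EReal) := by
  obtain ⟨m, rfl⟩ : ∃ m, n = m + 2 := ⟨n - 2, by omega⟩
  have hr : 0 < r (m + 2) := by omega
  have := hprob (m + 1) (by omega) le_rfl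
  have hA : IsCompact (K (m + 1) ∩ Prod.fst ⁻¹' reach r F1 F K1 K (m + 1)) :=
    (hK (m + 1)).inter_right
      ((isCompact_reach hF1 hF hK1 hK (m + 1)).isClosed.preimage continuous_fst)
  obtain ⟨p, ⟨hpK, hp⟩, hle⟩ := hA.exists_le_integral_of_ae_mem
    (f := fun p => F (m + 1) p.1 p.2 ⟨0, hr⟩) ((continuous_apply _).comp (hF (m + 1)))
    (ae_mem_reach hF1 hF hK1 hK hsupp1 hsupp hcons1 hcons (m + 1) (by omega) le_rfl)
  obtain ⟨x, ⟨hx1, hx⟩, hxs⟩ :=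
    exists_isFeasibleUpTo_of_mem_reach (m + 2) _ (mem_reach_succ (by omega) hpK hp)
  refine le_trans (sInf_le ⟨x, hx1, hx, rfl⟩) ?_
  rw [hxs]
  exact EReal.coe_le_coe_iff.mpr hle
end

section
/- For n = 4 and the odd-even ordering, the polynomial p_4(x_1,x_2,x_3,x_4) = (1+x_1x_2)(1+x_2x_3)(1+x_3x_4) equals the matrix product [1, x_1] · A(x_3) · B(x_2) · [1, x_4]^T, where A(x_3) is the 2×6 matrix [[1,0,x_3,0,x_3^2,0],[0,1,0,x_3,0,x_3^2]] and B(x_2) is the 6×2 matrix with rows (1,0), (x_2,0), (x_2,1), (x_2^2,x_2), (0,x_2), (0,x_2^2). -/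
/-- the odd-even tensor-train factorization of
p₄ = (1+x₁x₂)(1+x₂x₃)(1+x₃x₄). -/
theorem stmt_18 (x1 x2 x3 x4 : ℝ) :
    ((!![1, x1] : Matrix (Fin 1) (Fin 2) ℝ) *
        (!![1, 0, x3, 0, x3 ^ 2, 0; 0, 1, 0, x3, 0, x3 ^ 2] : Matrix (Fin 2) (Fin 6) ℝ) *
        (!![(1 : ℝ), 0; x2, 0; x2, 1; x2 ^ 2, x2; 0, x2; 0, x2 ^ 2] :
          Matrix (Fin 6) (Fin 2) ℝ) *
        (!![1; x4] : Matrix (Fin 2) (Fin 1) ℝ)) 0 0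
      = (1 + x1 * x2) * (1 + x2 * x3) * (1 + x3 * x4) := by
  simp [Matrix.mul_apply, Fin.sum_univ_succ]
  ring
end
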